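/- For every integer k ≥ 2, there exists a one-way probabilistic blind one-counter automaton (1P1BCA) over the alphabet {a,b} that recognizes the language EQ* with negative one-sided error bound 1/k: every string in EQ* is accepted with probability 1, and every string over {a,b} not in EQ* is accepted with probability at most 1/k. -/

import Mathlib

/-- Input symbols extended with the left (`cent`) and right (`dollar`) end-markers. -/
inductive TSym (α : Type) : Type
  | cent : TSym α
  | letter : α → TSym α
  | dollar : TSym α

/-- The tape content `¢ w $` for an input word `w`. -/
def tagged {α : Type} (w : List α) : List (TSym α) :=
  TSym.cent :: (w.map TSym.letter ++ [TSym.dollar])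

/-- A one-way probabilistic blind one-counter automaton: no zero-test during the
computation, and acceptance additionally requires the counter to be zero at the end. -/
structure OneP1BCA (α : Type) where
  Q : Type
  [fintypeQ : Fintype Q]
  [decQ : DecidableEq Q]
  q0 : Q
  acc : Finset Q
  m : ℕ
  δ : Q → TSym α → Q → ℤ → ℝ
  nonneg : ∀ q σ q' c, 0 ≤ δ q σ q' c
  support : ∀ q σ q' c, δ q σ q' c ≠ 0 → |c| ≤ (m : ℤ)
  total : ∀ q σ, (∑ q' : Q, ∑ c ∈ Finset.Icc (-(m : ℤ)) (m : ℤ), δ q σ q' c) = 1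

attribute [instance] OneP1BCA.fintypeQ OneP1BCA.decQ

namespace OneP1BCA

variable {α : Type} (M : OneP1BCA α)

/-- One step of the evolution of the probability distribution over configurations. -/
noncomputable def stepD (μ : M.Q × ℤ → ℝ) (σ : TSym α) : M.Q × ℤ → ℝ :=
  fun p' => ∑ q : M.Q, ∑ c ∈ Finset.Icc (-(M.m : ℤ)) (M.m : ℤ),
    μ (q, p'.2 - c) * M.δ q σ p'.1 c

/-- Initial distribution: point mass on `(q0, 0)`. -/
def initD : M.Q × ℤ → ℝ := fun p => if p = (M.q0, 0) then 1 else 0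

/-- Distribution over configurations after reading `¢ w $`. -/
noncomputable def finalD (w : List α) : M.Q × ℤ → ℝ := (tagged w).foldl M.stepD M.initD

/-- Acceptance probability: total probability of paths ending in an accepting
state with counter value exactly `0`. -/
noncomputable def accProb (w : List α) : ℝ :=
  ∑ q ∈ M.acc, M.finalD w (q, 0)

/-- `M` recognizes `L` with negative one-sided error bound `ε`. -/
def recognizesNegOneSided (L : Set (List α)) (ε : ℝ) : Prop :=
  (∀ w ∈ L, M.accProb w = 1) ∧ (∀ w ∉ L, M.accProb w ≤ ε)

end OneP1BCA

/-- The alphabet `{a, b}`. -/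
inductive Γ2 : Type
  | a : Γ2
  | b : Γ2
deriving DecidableEq

/-- The language `EQ = { a^n b^n : n > 0 }`. -/
def EQ : Language Γ2 :=
  {w | ∃ n : ℕ, 0 < n ∧ w = List.replicate n Γ2.a ++ List.replicate n Γ2.b}

/-- The Kleene closure `EQ*`. -/
def EQstar : Language Γ2 := KStar.kstar EQ

/-!
On the first `a` of each block the automaton picks `c ∈ {1, …, k}` uniformly at random, adds `c`
to the counter for every `a` and subtracts it for every `b` of that block, and checks the shape
`(a⁺b⁺)*` deterministically. So a well-formed word `a^{n₁}b^{m₁} ⋯ a^{n_r}b^{m_r}` ends with counter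
`∑ cᵢ (nᵢ - mᵢ)`. On a word of `EQ*` every path ends at `0`. If some block is unbalanced, fix every
choice except the one made in the last unbalanced block: the counter is then an injective function
of that choice, so at most one of its `k` values leads to `0`, and the word is accepted with
probability at most `1/k`.
-/

lemma List.sum_map_ite_eq_count {β : Type*} [DecidableEq β] (l : List β) (b : β) (a : ℝ) :
    (l.map fun x => if b = x then a else 0).sum = (l : Multiset β).count b * a := by
  rw [Multiset.coe_count]
  induction l with
  | nil => simp
  | cons x l ih =>
    rw [List.map_cons, List.sum_cons, ih, List.count_cons]
    by_cases h : b = x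
    · simp [h, add_mul, add_comm]
    · simp [h, Ne.symm h]

lemma sum_ite_eq_le_of_injective {ι : Type*} [Fintype ι] {f : ι → ℤ} (hf : Function.Injective f)
    (t : ℤ) {a : ℝ} (ha : 0 ≤ a) : ∑ i, (if f i = t then a else 0) ≤ a := by
  by_cases h : ∃ i, f i = t
  · obtain ⟨i, hi⟩ := h
    rw [Fintype.sum_eq_single i fun j hj => if_neg fun hj' => hj (hf (hj'.trans hi.symm)),
      if_pos hi]
  · push Not at h
    simp [h, ha]

namespace OneP1BCA

section Run

variable {α Q : Type} (T : Q → TSym α → List (Q × ℤ))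

noncomputable def step (σ : TSym α) (it : ℝ × Q × ℤ) : List (ℝ × Q × ℤ) :=
  (T it.2.1 σ).map fun p => (it.1 / (T it.2.1 σ).length, p.1, it.2.2 + p.2)

/-- The weighted configurations `(probability, state, counter)` at the ends of all computation
paths on the tape `s`, when in state `q` reading `σ` each entry of `T q σ` is taken with equal
probability. -/
noncomputable def run (L : List (ℝ × Q × ℤ)) (s : List (TSym α)) : List (ℝ × Q × ℤ) :=
  s.foldl (fun L σ => L.flatMap (step T σ)) L

variable {T}

@[simp] lemma run_nil (L : List (ℝ × Q × ℤ)) : run T L [] = L := rfl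

lemma run_cons (L : List (ℝ × Q × ℤ)) (σ : TSym α) (s : List (TSym α)) :
    run T L (σ :: s) = run T (L.flatMap (step T σ)) s := rfl

lemma run_append (L : List (ℝ × Q × ℤ)) (s t : List (TSym α)) :
    run T L (s ++ t) = run T (run T L s) t :=
  List.foldl_append ..

lemma run_flatMap {β : Type*} (l : List β) (f : β → List (ℝ × Q × ℤ)) (s : List (TSym α)) :
    run T (l.flatMap f) s = l.flatMap fun b => run T (f b) s := by
  induction s generalizing f with
  | nil => rfl
  | cons σ s ih => simp only [run_cons, List.flatMap_assoc, ih]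

lemma run_map {β : Type*} (l : List β) (f : β → ℝ × Q × ℤ) (s : List (TSym α)) :
    run T (l.map f) s = l.flatMap fun b => run T [f b] s := by
  rw [List.map_eq_flatMap, run_flatMap]

lemma run_eq_flatMap (L : List (ℝ × Q × ℤ)) (s : List (TSym α)) :
    run T L s = L.flatMap fun it => run T [it] s := by
  simpa using run_map L id s

lemma run_cons_of_eq_singleton {q q' : Q} {σ : TSym α} {c : ℤ} (h : T q σ = [(q', c)]) (w : ℝ)
    (x : ℤ) (s : List (TSym α)) : run T [(w, q, x)] (σ :: s) = run T [(w, q', x + c)] s := by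
  simp [run_cons, step, h]

end Run

section Mass

variable {Q : Type} [DecidableEq Q]

/-- The distribution on configurations described by a list of weighted configurations. -/
def mass (L : List (ℝ × Q × ℤ)) (p : Q × ℤ) : ℝ :=
  (L.map fun it => if p = it.2 then it.1 else 0).sum

lemma mass_cons (it : ℝ × Q × ℤ) (L : List (ℝ × Q × ℤ)) :
    mass (it :: L) = (fun p => if p = it.2 then it.1 else 0) + mass L := by
  ext p
  simp [mass]

lemma mass_flatMap {β : Type*} (l : List β) (f : β → List (ℝ × Q × ℤ)) (p : Q × ℤ) :
    mass (l.flatMap f) p = (l.map fun b => mass (f b) p).sum := by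
  simp [mass, List.flatMap, List.sum_flatten, List.map_flatten, Function.comp_def]

lemma mass_eq_zero_of_forall_ne {L : List (ℝ × Q × ℤ)} {q : Q} (h : ∀ it ∈ L, it.2.1 ≠ q)
    (x : ℤ) : mass L (q, x) = 0 := by
  refine List.sum_eq_zero fun y hy => ?_
  obtain ⟨it, hit, rfl⟩ := List.mem_map.mp hy
  simp [Prod.ext_iff, (h it hit).symm]

lemma mass_step {α : Type} (T : Q → TSym α → List (Q × ℤ)) (σ : TSym α) (it : ℝ × Q × ℤ)
    (p : Q × ℤ) : mass (step T σ it) p =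
      it.1 * ((T it.2.1 σ : Multiset (Q × ℤ)).count (p.1, p.2 - it.2.2) / (T it.2.1 σ).length) := by
  have hp : ∀ c : Q × ℤ, p = (c.1, it.2.2 + c.2) ↔ (p.1, p.2 - it.2.2) = c := fun c => by
    constructor <;> rintro rfl <;> simp
  simp only [mass, step, List.map_map, Function.comp_def, hp, List.sum_map_ite_eq_count]
  ring

end Mass

section Evolution

variable {α : Type} (M : OneP1BCA α)

lemma stepD_add (μ ν : M.Q × ℤ → ℝ) (σ : TSym α) :
    M.stepD (μ + ν) σ = M.stepD μ σ + M.stepD ν σ := by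
  ext p
  simp only [stepD, Pi.add_apply, add_mul, Finset.sum_add_distrib]

lemma stepD_single (q : M.Q) (x : ℤ) (w : ℝ) (σ : TSym α) (p : M.Q × ℤ) :
    M.stepD (fun p => if p = (q, x) then w else 0) σ p = w * M.δ q σ p.1 (p.2 - x) := by
  have hc : ∀ c, p.2 - c = x ↔ c = p.2 - x := fun c => by omega
  simp only [stepD, Prod.mk.injEq, ite_and, ite_mul, zero_mul, hc]
  rw [Fintype.sum_eq_single q fun q' hq' => by simp [hq']]
  simp only [if_true, Finset.sum_ite_eq']
  split_ifs with h
  · rfl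
  · rw [Finset.mem_Icc, ← abs_le] at h
    rw [by_contra fun h' => h (M.support _ _ _ _ h'), mul_zero]

lemma stepD_mass (L : List (ℝ × M.Q × ℤ)) (σ : TSym α) (p : M.Q × ℤ) :
    M.stepD (mass L) σ p = (L.map fun it => it.1 * M.δ it.2.1 σ p.1 (p.2 - it.2.2)).sum := by
  induction L with
  | nil => simp [stepD, mass]
  | cons it L ih =>
    rw [mass_cons, stepD_add, Pi.add_apply, ih, stepD_single, List.map_cons, List.sum_cons]

end Evolution

section OfLists

variable {α Q : Type} [DecidableEq Q] [Fintype Q] (T : Q → TSym α → List (Q × ℤ))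

noncomputable abbrev ofLists (q₀ : Q) (acc : Finset Q) {m : ℕ} (hT : ∀ q σ, T q σ ≠ [])
    (hm : ∀ q σ, ∀ p ∈ T q σ, |p.2| ≤ m) : OneP1BCA α where
  Q := Q
  q0 := q₀
  acc := acc
  m := m
  δ q σ q' c := (T q σ : Multiset (Q × ℤ)).count (q', c) / (T q σ).length
  nonneg _ _ _ _ := by positivity
  support q σ q' c h := hm q σ (q', c) <| Multiset.mem_coe.mp <| Multiset.count_ne_zero.mp
    fun h0 => h (by rw [h0, Nat.cast_zero, zero_div])
  total q σ := by
    have hmem : ∀ p ∈ (T q σ : Multiset (Q × ℤ)), p ∈ Finset.univ ×ˢ Finset.Icc (-(m : ℤ)) m :=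
      fun p hp => by simpa [abs_le] using hm q σ p hp
    rw [← Finset.sum_product' (f := fun q' c =>
      ((T q σ : Multiset (Q × ℤ)).count (q', c) : ℝ) / (T q σ).length), ← Finset.sum_div]
    simp only [Prod.mk.eta]
    rw [← Nat.cast_sum, Multiset.sum_count_eq_card hmem, Multiset.coe_card]
    exact div_self (by simpa using hT q σ)

variable {T} (q₀ : Q) (acc : Finset Q) {m : ℕ} (hT : ∀ q σ, T q σ ≠ [])
  (hm : ∀ q σ, ∀ p ∈ T q σ, |p.2| ≤ m)

lemma stepD_ofLists_mass (L : List (ℝ × Q × ℤ)) (σ : TSym α) :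
    (ofLists T q₀ acc hT hm).stepD (mass L) σ = mass (L.flatMap (step T σ)) := by
  ext p
  rw [stepD_mass, mass_flatMap]
  simp only [mass_step]

lemma accProb_ofLists (w : List α) :
    (ofLists T q₀ acc hT hm).accProb w =
      ∑ q ∈ acc, mass (run T [(1, q₀, 0)] (tagged w)) (q, 0) := by
  have hinit : (ofLists T q₀ acc hT hm).initD = mass [(1, q₀, 0)] := by
    ext p
    simp [initD, mass]
  have hfold : ∀ (s : List (TSym α)) (L : List (ℝ × Q × ℤ)),
      s.foldl (ofLists T q₀ acc hT hm).stepD (mass L) = mass (run T L s) := by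
    intro s
    induction s with
    | nil => intro L; rfl
    | cons σ s ih => intro L; rw [List.foldl_cons, stepD_ofLists_mass, ih]; rfl
  simp only [accProb, finalD, hinit, hfold]

end OfLists

end OneP1BCA

def ofBlocks (bl : List (ℕ × ℕ)) : List Γ2 :=
  bl.flatMap fun p => List.replicate p.1 .a ++ List.replicate p.2 .b

lemma mem_EQstar_iff {w : List Γ2} :
    w ∈ EQstar ↔ ∃ bl : List (ℕ × ℕ), (∀ p ∈ bl, 0 < p.1 ∧ p.1 = p.2) ∧ w = ofBlocks bl := by
  rw [EQstar, Language.mem_kstar]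
  constructor
  · rintro ⟨S, rfl, hS⟩
    induction S with
    | nil => exact ⟨[], by simp, rfl⟩
    | cons y S ih =>
      obtain ⟨bl, hbl, hS'⟩ := ih fun z hz => hS z (List.mem_cons_of_mem _ hz)
      obtain ⟨n, hn, rfl⟩ := hS y List.mem_cons_self
      refine ⟨(n, n) :: bl, ?_, by simp [ofBlocks, hS']⟩
      simpa [hn] using hbl
  · rintro ⟨bl, hbl, rfl⟩
    refine ⟨bl.map fun p => List.replicate p.1 .a ++ List.replicate p.2 .b,
      by rw [ofBlocks, List.flatMap_def], ?_⟩
    simp only [List.mem_map, forall_exists_index, and_imp, forall_apply_eq_imp_iff₂]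
    exact fun p hp => ⟨p.1, (hbl p hp).1, by rw [(hbl p hp).2]⟩

lemma word_cases_ofBlocks (w : List Γ2) :
    (∃ v, w = .b :: v) ∨
    (∃ bl : List (ℕ × ℕ), (∀ p ∈ bl, 0 < p.1 ∧ 0 < p.2) ∧ w = ofBlocks bl) ∨
    (∃ (bl : List (ℕ × ℕ)) (n : ℕ), (∀ p ∈ bl, 0 < p.1 ∧ 0 < p.2) ∧ 0 < n ∧
      w = ofBlocks bl ++ List.replicate n .a) := by
  induction w using List.reverseRecOn with
  | nil => exact .inr (.inl ⟨[], by simp, rfl⟩)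
  | append_singleton w x ih =>
    rcases ih with ⟨v, rfl⟩ | ⟨bl, hbl, rfl⟩ | ⟨bl, n, hbl, hn, rfl⟩
    · exact .inl ⟨v ++ [x], rfl⟩
    · cases x with
      | a => exact .inr (.inr ⟨bl, 1, hbl, one_pos, rfl⟩)
      | b =>
        rcases List.eq_nil_or_concat bl with rfl | ⟨bl, p, rfl⟩
        · exact .inl ⟨[], rfl⟩
        · refine .inr (.inl ⟨bl ++ [(p.1, p.2 + 1)], ?_, ?_⟩)
          · simp only [List.concat_eq_append, List.mem_append, List.mem_singleton] at hbl ⊢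
            rintro q (hq | rfl)
            · exact hbl q (.inl hq)
            · exact ⟨(hbl p (.inr rfl)).1, Nat.succ_pos _⟩
          · simp [ofBlocks, List.replicate_succ']
    · cases x with
      | a => exact .inr (.inr ⟨bl, n + 1, hbl, n.succ_pos, by simp [List.replicate_succ']⟩)
      | b =>
        refine .inr (.inl ⟨bl ++ [(n, 1)], ?_, by simp [ofBlocks]⟩)
        simp only [List.mem_append, List.mem_singleton]
        rintro q (hq | rfl)
        · exact hbl q hq
        · exact ⟨hn, one_pos⟩

namespace EQstarRecognizer

open OneP1BCA

/-- `A c` and `B c` read the `a`s and the `b`s of a block whose random coefficient is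
`coef c = c + 1`. -/
inductive State (k : ℕ) : Type
  | start | acc | rej
  | A (c : Fin k)
  | B (c : Fin k)
  deriving DecidableEq, Fintype

def coef {k : ℕ} (c : Fin k) : ℤ := c + 1

lemma coef_injective {k : ℕ} : Function.Injective (coef (k := k)) :=
  fun c c' h => Fin.ext (by unfold coef at h; omega)

lemma abs_coef_le {k : ℕ} (c : Fin k) : |coef c| ≤ k := by
  rw [coef, abs_of_nonneg (by positivity)]
  omega

def openBlock (k : ℕ) : List (State k × ℤ) := (List.finRange k).map fun c => (.A c, coef c)

def transitions {k : ℕ} : State k → TSym Γ2 → List (State k × ℤ)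
  | .start, .cent => [(.start, 0)]
  | .start, .letter .a => openBlock k
  | .start, .letter .b => [(.rej, 0)]
  | .start, .dollar => [(.acc, 0)]
  | .A c, .letter .a => [(.A c, coef c)]
  | .A c, .letter .b => [(.B c, -coef c)]
  | .A _, .cent => [(.rej, 0)]
  | .A _, .dollar => [(.rej, 0)]
  | .B _, .letter .a => openBlock k
  | .B c, .letter .b => [(.B c, -coef c)]
  | .B _, .dollar => [(.acc, 0)]
  | .B _, .cent => [(.rej, 0)]
  | .acc, _ => [(.rej, 0)]
  | .rej, _ => [(.rej, 0)]

lemma transitions_ne_nil {k : ℕ} (hk : k ≠ 0) (q : State k) (σ : TSym Γ2) :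
    transitions q σ ≠ [] := by
  rcases q with _ | _ | _ | c | c <;> rcases σ with _ | (_ | _) | _ <;>
    simp [transitions, openBlock, hk]

lemma abs_le_of_mem_transitions {k : ℕ} (q : State k) (σ : TSym Γ2) :
    ∀ p ∈ transitions q σ, |p.2| ≤ k := by
  rcases q with _ | _ | _ | c | c <;> rcases σ with _ | (_ | _) | _ <;>
    simp [transitions, openBlock, abs_coef_le]

noncomputable def automaton (k : ℕ) (hk : k ≠ 0) : OneP1BCA Γ2 :=
  ofLists transitions .start {.acc} (transitions_ne_nil hk) abs_le_of_mem_transitions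

variable {k : ℕ}

lemma run_A_replicate_a (c : Fin k) (n : ℕ) (w : ℝ) (x : ℤ) :
    run transitions [(w, .A c, x)] (List.replicate n (.letter .a)) =
      [(w, .A c, x + n * coef c)] := by
  induction n generalizing x with
  | zero => simp
  | succ n ih =>
    rw [List.replicate_succ, run_cons_of_eq_singleton rfl, ih]
    simp only [List.cons.injEq, Prod.mk.injEq, true_and, and_true]
    push_cast; ring

lemma run_B_replicate_b (c : Fin k) (n : ℕ) (w : ℝ) (x : ℤ) :
    run transitions [(w, .B c, x)] (List.replicate n (.letter .b)) =
      [(w, .B c, x - n * coef c)] := by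
  induction n generalizing x with
  | zero => simp
  | succ n ih =>
    rw [List.replicate_succ, run_cons_of_eq_singleton rfl, ih]
    simp only [List.cons.injEq, Prod.mk.injEq, true_and, and_true]
    push_cast; ring

lemma run_rej (s : List (TSym Γ2)) (w : ℝ) (x : ℤ) :
    run transitions [(w, (.rej : State k), x)] s = [(w, .rej, x)] := by
  induction s with
  | nil => rfl
  | cons σ s ih => rw [run_cons_of_eq_singleton (by cases σ <;> rfl), add_zero, ih]

/-- The states from which a new block `a⁺b⁺` may start or the input may end. -/
def IsReady (q : State k) : Prop := q = .start ∨ ∃ c, q = .B c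

lemma IsReady.transitions_a {q : State k} (hq : IsReady q) :
    transitions q (.letter .a) = openBlock k := by
  rcases hq with rfl | ⟨c, rfl⟩ <;> rfl

lemma IsReady.transitions_dollar {q : State k} (hq : IsReady q) :
    transitions q .dollar = [(.acc, 0)] := by
  rcases hq with rfl | ⟨c, rfl⟩ <;> rfl

lemma run_replicate_a_of_isReady {q : State k} (hq : IsReady q) (n : ℕ) (w : ℝ) (x : ℤ) :
    run transitions [(w, q, x)] (List.replicate (n + 1) (.letter .a)) =
      (List.finRange k).map fun c => (w / k, .A c, x + (n + 1 : ℕ) * coef c) := by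
  rw [List.map_eq_flatMap, List.replicate_succ, run_cons, List.flatMap_singleton, step,
    hq.transitions_a, openBlock, List.map_map, run_map]
  refine List.flatMap_congr fun c _ => ?_
  simp only [Function.comp_apply, List.length_map, List.length_finRange, run_A_replicate_a,
    List.cons.injEq, Prod.mk.injEq, true_and, and_true]
  push_cast; ring

lemma run_block {q : State k} (hq : IsReady q) {n m : ℕ} (hn : 0 < n) (hm : 0 < m) (w : ℝ)
    (x : ℤ) :
    run transitions [(w, q, x)] (List.replicate n (.letter .a) ++ List.replicate m (.letter .b)) =
      (List.finRange k).map fun c => (w / k, .B c, x + coef c * (n - m)) := by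
  obtain ⟨n, rfl⟩ := Nat.exists_eq_add_one_of_ne_zero hn.ne'
  obtain ⟨m, rfl⟩ := Nat.exists_eq_add_one_of_ne_zero hm.ne'
  rw [List.map_eq_flatMap, run_append, run_replicate_a_of_isReady hq, run_map]
  refine List.flatMap_congr fun c _ => ?_
  rw [List.replicate_succ, run_cons_of_eq_singleton rfl, run_B_replicate_b]
  simp only [List.cons.injEq, Prod.mk.injEq, true_and, and_true]
  push_cast; ring

variable (k) in
noncomputable def blocks : List (ℕ × ℕ) → ℝ × State k × ℤ → List (ℝ × State k × ℤ)
  | [], it => [it]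
  | p :: bl, it => (List.finRange k).flatMap fun c =>
      blocks bl (it.1 / k, .B c, it.2.2 + coef c * (p.1 - p.2))

lemma run_ofBlocks {bl : List (ℕ × ℕ)} (hbl : ∀ p ∈ bl, 0 < p.1 ∧ 0 < p.2) {q : State k}
    (hq : IsReady q) (w : ℝ) (x : ℤ) :
    run transitions [(w, q, x)] ((ofBlocks bl).map .letter) = blocks k bl (w, q, x) := by
  induction bl generalizing w q x with
  | nil => rfl
  | cons p bl ih =>
    simp only [List.forall_mem_cons] at hbl
    simp only [ofBlocks, List.flatMap_cons, List.map_append, List.map_replicate] at ih ⊢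
    rw [run_append, run_block hq hbl.1.1 hbl.1.2, run_map, blocks]
    exact List.flatMap_congr fun c _ => ih hbl.2 (.inr ⟨c, rfl⟩) _ _

lemma isReady_of_mem_blocks {bl : List (ℕ × ℕ)} {it : ℝ × State k × ℤ} (hit : IsReady it.2.1) :
    ∀ it' ∈ blocks k bl it, IsReady it'.2.1 := by
  induction bl generalizing it with
  | nil => simpa [blocks] using hit
  | cons p bl ih =>
    simp only [blocks, List.mem_flatMap]
    rintro it' ⟨c, -, hc⟩
    exact ih (.inr ⟨c, rfl⟩) it' hc

def counterWeight (t : ℤ) (L : List (ℝ × State k × ℤ)) : ℝ :=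
  (L.map fun it => if it.2.2 = t then it.1 else 0).sum

lemma counterWeight_flatMap {β : Type*} (t : ℤ) (l : List β) (f : β → List (ℝ × State k × ℤ)) :
    counterWeight t (l.flatMap f) = (l.map fun b => counterWeight t (f b)).sum := by
  simp [counterWeight, List.flatMap, List.sum_flatten, List.map_flatten, Function.comp_def]

lemma mass_run_dollar_of_isReady {R : List (ℝ × State k × ℤ)} (hR : ∀ it ∈ R, IsReady it.2.1)
    (t : ℤ) : mass (run transitions R [.dollar]) (.acc, t) = counterWeight t R := by
  induction R with
  | nil => rfl
  | cons it R ih =>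
    simp only [List.forall_mem_cons] at hR
    obtain ⟨w, q, x⟩ := it
    rw [run_eq_flatMap, List.flatMap_cons, ← run_eq_flatMap,
      run_cons_of_eq_singleton hR.1.transitions_dollar, run_nil, List.singleton_append, mass_cons,
      Pi.add_apply, ih hR.2]
    simp [counterWeight, eq_comm]

lemma counterWeight_blocks_of_balanced (hk : k ≠ 0) {bl : List (ℕ × ℕ)}
    (hbl : ∀ p ∈ bl, p.1 = p.2) (t : ℤ) (w : ℝ) (q : State k) (x : ℤ) :
    counterWeight t (blocks k bl (w, q, x)) = if x = t then w else 0 := by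
  induction bl generalizing w q x with
  | nil => simp [blocks, counterWeight]
  | cons p bl ih =>
    simp only [List.forall_mem_cons] at hbl
    simp only [blocks, counterWeight_flatMap, hbl.1, sub_self, mul_zero, add_zero, ih hbl.2,
      ← Fin.sum_univ_def]
    split_ifs
    · rw [Finset.sum_const, Finset.card_univ, Fintype.card_fin, nsmul_eq_mul]
      field_simp
    · simp

/-- The last unbalanced block `(n, m)` moves the counter by `coef c * (n - m)`, which takes `k`
distinct values, and the balanced blocks after it leave the counter unchanged. -/
lemma counterWeight_blocks_le (hk : k ≠ 0) {bl : List (ℕ × ℕ)} (hbl : ∃ p ∈ bl, p.1 ≠ p.2)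
    (t : ℤ) {w : ℝ} (hw : 0 ≤ w) (q : State k) (x : ℤ) :
    counterWeight t (blocks k bl (w, q, x)) ≤ w / k := by
  induction bl generalizing w q x with
  | nil => simp at hbl
  | cons p bl ih =>
    simp only [blocks, counterWeight_flatMap, ← Fin.sum_univ_def]
    by_cases htail : ∃ p ∈ bl, p.1 ≠ p.2
    · calc ∑ c : Fin k, counterWeight t (blocks k bl (w / k, .B c, x + coef c * (p.1 - p.2)))
          ≤ ∑ _c : Fin k, w / k / k := Finset.sum_le_sum fun c _ => ih htail (by positivity) _ _
        _ = w / k := by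
          rw [Finset.sum_const, Finset.card_univ, Fintype.card_fin, nsmul_eq_mul]
          field_simp
    · push Not at htail
      have hp : (p.1 : ℤ) - p.2 ≠ 0 := by
        obtain ⟨p', hp', hne⟩ := hbl
        rcases List.mem_cons.mp hp' with rfl | hp'
        · omega
        · exact absurd (htail p' hp') hne
      simp only [counterWeight_blocks_of_balanced hk htail]
      exact sum_ite_eq_le_of_injective
        (fun c c' h => coef_injective (mul_right_cancel₀ hp (by simpa using h))) t (by positivity)

section AcceptanceProbability

variable (hk : k ≠ 0)

lemma accProb_automaton (w : List Γ2) :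
    (automaton k hk).accProb w =
      mass (run transitions [(1, (.start : State k), 0)] (w.map .letter ++ [.dollar]))
        (.acc, 0) := by
  rw [automaton, accProb_ofLists, Finset.sum_singleton, tagged, run_cons_of_eq_singleton rfl,
    add_zero]

lemma accProb_ofBlocks {bl : List (ℕ × ℕ)} (hbl : ∀ p ∈ bl, 0 < p.1 ∧ 0 < p.2) :
    (automaton k hk).accProb (ofBlocks bl) = counterWeight 0 (blocks k bl (1, .start, 0)) := by
  rw [accProb_automaton, run_append, run_ofBlocks hbl (.inl rfl),
    mass_run_dollar_of_isReady (isReady_of_mem_blocks (.inl rfl))]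

lemma accProb_b_cons (v : List Γ2) : (automaton k hk).accProb (.b :: v) = 0 := by
  rw [accProb_automaton, List.map_cons, List.cons_append, run_cons_of_eq_singleton rfl, run_rej]
  exact mass_eq_zero_of_forall_ne (by simp) 0

lemma accProb_ofBlocks_append_a {bl : List (ℕ × ℕ)} (hbl : ∀ p ∈ bl, 0 < p.1 ∧ 0 < p.2) {n : ℕ}
    (hn : 0 < n) : (automaton k hk).accProb (ofBlocks bl ++ List.replicate n .a) = 0 := by
  obtain ⟨n, rfl⟩ := Nat.exists_eq_add_one_of_ne_zero hn.ne'
  rw [accProb_automaton, List.map_append, List.map_replicate, List.append_assoc, run_append,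
    run_ofBlocks hbl (.inl rfl), run_eq_flatMap]
  refine mass_eq_zero_of_forall_ne (fun it hit => ?_) 0
  obtain ⟨it₀, hit₀, hit⟩ := List.mem_flatMap.mp hit
  rw [run_append, run_replicate_a_of_isReady (isReady_of_mem_blocks (.inl rfl) it₀ hit₀),
    run_map] at hit
  obtain ⟨c, -, hc⟩ := List.mem_flatMap.mp hit
  rw [run_cons_of_eq_singleton rfl, run_nil, List.mem_singleton] at hc
  simp [hc]

end AcceptanceProbability

end EQstarRecognizer

open EQstarRecognizer in
/-- for every `k ≥ 2`, a 1P1BCA recognizes `EQ*` with negative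
one-sided error bound `1/k`. -/
theorem stmt12 (k : ℕ) (hk : 2 ≤ k) : ∃ M : OneP1BCA Γ2,
    (∀ w ∈ EQstar, M.accProb w = 1) ∧ (∀ w ∉ EQstar, M.accProb w ≤ 1 / (k : ℝ)) := by
  have hk0 : k ≠ 0 := by omega
  refine ⟨automaton k hk0, fun w hw => ?_, fun w hw => ?_⟩
  · obtain ⟨bl, hbl, rfl⟩ := mem_EQstar_iff.mp hw
    rw [accProb_ofBlocks hk0 fun p hp => ⟨(hbl p hp).1, (hbl p hp).2 ▸ (hbl p hp).1⟩,
      counterWeight_blocks_of_balanced hk0 (fun p hp => (hbl p hp).2), if_pos rfl]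
  · rcases word_cases_ofBlocks w with ⟨v, rfl⟩ | ⟨bl, hbl, rfl⟩ | ⟨bl, n, hbl, hn, rfl⟩
    · rw [accProb_b_cons hk0]
      positivity
    · have hunbalanced : ∃ p ∈ bl, p.1 ≠ p.2 := by
        by_contra! h
        exact hw (mem_EQstar_iff.mpr ⟨bl, fun p hp => ⟨(hbl p hp).1, h p hp⟩, rfl⟩)
      rw [accProb_ofBlocks hk0 hbl]
      exact counterWeight_blocks_le hk0 hunbalanced 0 zero_le_one _ 0
    · rw [accProb_ofBlocks_append_a hk0 hbl hn]
      positivity
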